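/- Fundamental theorem of Hopf modules: if M is a left H-Hopf module in a braided monoidal category and the idempotent ν = α ∘ (σ ⊗ 1_M) ∘ φ splits through an object M^H, then there is an isomorphism H ⊗ M^H ≅ M which is a morphism of left H-Hopf modules, where H ⊗ M^H carries the free Hopf module structure with action μ ⊗ 1 and coaction δ ⊗ 1. -/

import Mathlib

/-!
Write `ν(m) = σ(m₋₁) m₀`. Because the antipode reverses the comultiplication, `ν` lands in the
coinvariants, and every `m` is recovered as `m = m₋₁ ν(m₀)`. So `h ⊗ x ↦ h · ι(x)` is a map of
Hopf modules `H ⊗ M^H ⟶ M`, and `m ↦ m₋₁ ⊗ υ(m₀)` is inverse to it: one composite is the identity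
by the reconstruction formula, the other because `ν(h · n) = ε(h) n` for coinvariant `n`.
-/

open CategoryTheory MonoidalCategory BraidedCategory

universe v u

/-- A Hopf algebra object in a braided monoidal category, given by explicit
structure maps and axioms. -/
structure HopfAlg (C : Type u) [Category.{v} C] [MonoidalCategory C]
    [BraidedCategory C] where
  H : C
  η : 𝟙_ C ⟶ H
  μ : H ⊗ H ⟶ H
  ε : H ⟶ 𝟙_ C
  δ : H ⟶ H ⊗ H
  σ : H ⟶ H
  mul_assoc : (μ ▷ H) ≫ μ = (α_ H H H).hom ≫ (H ◁ μ) ≫ μ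
  one_mul : (η ▷ H) ≫ μ = (λ_ H).hom
  mul_one : (H ◁ η) ≫ μ = (ρ_ H).hom
  coassoc : δ ≫ (δ ▷ H) = δ ≫ (H ◁ δ) ≫ (α_ H H H).inv
  counit_left : δ ≫ (ε ▷ H) = (λ_ H).inv
  counit_right : δ ≫ (H ◁ ε) = (ρ_ H).inv
  mul_counit : μ ≫ ε = (ε ⊗ₘ ε) ≫ (λ_ (𝟙_ C)).hom
  one_counit : η ≫ ε = 𝟙 (𝟙_ C)
  mul_comul : μ ≫ δ = (δ ⊗ₘ δ) ≫ tensorμ H H H H ≫ (μ ⊗ₘ μ)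
  one_comul : η ≫ δ = (λ_ (𝟙_ C)).inv ≫ (η ⊗ₘ η)
  antipode_left : δ ≫ (σ ▷ H) ≫ μ = ε ≫ η
  antipode_right : δ ≫ (H ◁ σ) ≫ μ = ε ≫ η

/-- A left Hopf module over a Hopf algebra object `A` in a braided monoidal
category: a left `A`-module and left `A`-comodule satisfying the Hopf module
compatibility law. -/
structure HopfModule {C : Type u} [Category.{v} C] [MonoidalCategory C]
    [BraidedCategory C] (A : HopfAlg C) where
  M : C
  act : A.H ⊗ M ⟶ M
  coact : M ⟶ A.H ⊗ M
  act_mul : (A.μ ▷ M) ≫ act = (α_ A.H A.H M).hom ≫ (A.H ◁ act) ≫ act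
  act_one : (A.η ▷ M) ≫ act = (λ_ M).hom
  coact_comul : coact ≫ (A.δ ▷ M) = coact ≫ (A.H ◁ coact) ≫ (α_ A.H A.H M).inv
  coact_counit : coact ≫ (A.ε ▷ M) = (λ_ M).inv
  compat : act ≫ coact = (A.δ ⊗ₘ coact) ≫ tensorμ A.H A.H A.H M ≫ (A.μ ⊗ₘ act)

section HopfObj

open scoped MonObj ComonObj HopfObj

variable {C : Type u} [Category.{v} C] [MonoidalCategory C] [BraidedCategory C]

/-- In Sweedler notation, `𝒮(h₁)₁ h₂ ⊗ 𝒮(h₁)₂ = 1 ⊗ 𝒮(h)`. -/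
theorem HopfObj.comul_antipode_comul_mul (H : C) [HopfObj H] :
    Δ[H] ≫ ((𝒮[H] ≫ Δ[H]) ▷ H) ≫ (α_ H H H).hom ≫ (H ◁ (β_ H H).hom) ≫ (α_ H H H).inv ≫
      (μ[H] ▷ H) = 𝒮[H] ≫ (λ_ H).inv ≫ (η[H] ▷ H) := by
  calc _ = Δ[H] ≫ H ◁ Δ[H] ≫ (α_ H H H).inv ≫ (((𝒮[H] ⊗ₘ 𝒮[H]) ≫ (β_ H H).hom) ▷ H) ≫
          (α_ H H H).hom ≫ (H ◁ (β_ H H).hom) ≫ (α_ H H H).inv ≫ (μ[H] ▷ H) := by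
        rw [HopfObj.antipode_comul, braiding_naturality]
        simp only [comp_whiskerRight, Category.assoc, ComonObj.comul_assoc_flip_assoc]
    _ = Δ[H] ≫ H ◁ Δ[H] ≫ (𝒮[H] ⊗ₘ (𝒮[H] ▷ H)) ≫ (β_ H (H ⊗ H)).hom ≫ (μ[H] ▷ H) := by
        simp only [comp_whiskerRight, Category.assoc]
        rw [← tensorHom_id, ← associator_inv_naturality_assoc, tensorHom_id,
          braiding_tensor_right_hom]
        simp only [Category.assoc]
    _ = Δ[H] ≫ (β_ H H).hom ≫ ((Δ[H] ≫ 𝒮[H] ▷ H ≫ μ[H]) ⊗ₘ 𝒮[H]) := by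
        rw [braiding_naturality_assoc, braiding_naturality_right_assoc]
        simp only [MonoidalCategory.tensorHom_def, comp_whiskerRight, Category.assoc,
          whisker_exchange]
    _ = Δ[H] ≫ (β_ H H).hom ≫ ((ε[H] ≫ η[H]) ⊗ₘ 𝒮[H]) := by rw [HopfObj.antipode_left]
    _ = _ := by
        rw [← braiding_naturality]
        simp [MonoidalCategory.tensorHom_def', ← whisker_exchange]

end HopfObj

namespace HopfAlg

variable {C : Type u} [Category.{v} C] [MonoidalCategory C] [BraidedCategory C]

instance (A : HopfAlg C) : HopfObj A.H where
  one := A.η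
  mul := A.μ
  one_mul := A.one_mul
  mul_one := A.mul_one
  mul_assoc := A.mul_assoc
  counit := A.ε
  comul := A.δ
  counit_comul := A.counit_left
  comul_counit := A.counit_right
  comul_assoc := by rw [reassoc_of% A.coassoc, Iso.inv_hom_id, Category.comp_id]
  mul_comul := A.mul_comul
  one_comul := A.one_comul
  mul_counit := A.mul_counit
  one_counit := A.one_counit
  antipode := A.σ
  antipode_left := A.antipode_left
  antipode_right := A.antipode_right

end HopfAlg

namespace HopfModule

variable {C : Type u} [Category.{v} C] [MonoidalCategory C] [BraidedCategory C]
  {A : HopfAlg C} (N : HopfModule A)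

/-- The idempotent `ν : m ↦ σ(m₋₁) m₀`. -/
def coinvProj : N.M ⟶ N.M := N.coact ≫ (A.σ ▷ N.M) ≫ N.act

def IsCoinvariant {X : C} (g : X ⟶ N.M) : Prop :=
  g ≫ N.coact = g ≫ (λ_ N.M).inv ≫ (A.η ▷ N.M)

def extend {X : C} (g : X ⟶ N.M) : A.H ⊗ X ⟶ N.M := (A.H ◁ g) ≫ N.act

lemma whiskerLeft_act_act :
    (A.H ◁ N.act) ≫ N.act = (α_ A.H A.H N.M).inv ≫ (A.μ ▷ N.M) ≫ N.act := by
  rw [N.act_mul, Iso.inv_hom_id_assoc]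

lemma coact_whiskerLeft_coact :
    N.coact ≫ (A.H ◁ N.coact) = N.coact ≫ (A.δ ▷ N.M) ≫ (α_ A.H A.H N.M).hom := by
  rw [reassoc_of% N.coact_comul, Iso.inv_hom_id, Category.comp_id]

lemma coact_whiskerLeft_coinvProj_act : N.coact ≫ (A.H ◁ N.coinvProj) ≫ N.act = 𝟙 N.M := by
  rw [coinvProj, MonoidalCategory.whiskerLeft_comp, MonoidalCategory.whiskerLeft_comp]
  slice_lhs 1 2 => rw [coact_whiskerLeft_coact]
  slice_lhs 5 6 => rw [whiskerLeft_act_act]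
  have hσ : (α_ A.H A.H N.M).hom ≫ (A.H ◁ (A.σ ▷ N.M)) ≫ (α_ A.H A.H N.M).inv =
      ((A.H ◁ A.σ) ▷ N.M) := by simp
  slice_lhs 3 5 => rw [hσ]
  have hantipode : (A.δ ▷ N.M) ≫ ((A.H ◁ A.σ) ▷ N.M) ≫ (A.μ ▷ N.M) = ((A.ε ≫ A.η) ▷ N.M) := by
    rw [← comp_whiskerRight, ← comp_whiskerRight, A.antipode_right]
  slice_lhs 2 4 => rw [hantipode]
  rw [comp_whiskerRight]
  slice_lhs 1 2 => rw [N.coact_counit]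
  slice_lhs 2 3 => rw [N.act_one]
  simp

lemma isCoinvariant_coinvProj : N.IsCoinvariant N.coinvProj := by
  have hcomul : A.δ ≫ ((A.σ ≫ A.δ) ▷ A.H) ≫ (α_ A.H A.H A.H).hom ≫ (A.H ◁ (β_ A.H A.H).hom) ≫
      (α_ A.H A.H A.H).inv ≫ (A.μ ▷ A.H) = A.σ ≫ (λ_ A.H).inv ≫ (A.η ▷ A.H) :=
    HopfObj.comul_antipode_comul_mul A.H
  have hμ : (α_ (A.H ⊗ A.H) A.H N.M).hom ≫ tensorμ A.H A.H A.H N.M ≫ (A.μ ⊗ₘ N.act) =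
      (((α_ A.H A.H A.H).hom ≫ (A.H ◁ (β_ A.H A.H).hom) ≫ (α_ A.H A.H A.H).inv ≫
        (A.μ ▷ A.H)) ▷ N.M) ≫ (α_ A.H A.H N.M).hom ≫ (A.H ◁ N.act) := by
    rw [tensorμ, MonoidalCategory.tensorHom_def]
    monoidal
  calc N.coinvProj ≫ N.coact
      = N.coact ≫ (A.H ◁ N.coact) ≫ (A.σ ▷ (A.H ⊗ N.M)) ≫ (A.δ ▷ (A.H ⊗ N.M)) ≫
          tensorμ A.H A.H A.H N.M ≫ (A.μ ⊗ₘ N.act) := by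
        rw [coinvProj, Category.assoc, Category.assoc, N.compat,
          MonoidalCategory.tensorHom_def', Category.assoc, ← whisker_exchange_assoc]
    _ = N.coact ≫ ((A.δ ≫ (A.σ ≫ A.δ) ▷ A.H ≫ (α_ A.H A.H A.H).hom ≫
          (A.H ◁ (β_ A.H A.H).hom) ≫ (α_ A.H A.H A.H).inv ≫ (A.μ ▷ A.H)) ▷ N.M) ≫
          (α_ A.H A.H N.M).hom ≫ (A.H ◁ N.act) := by
        rw [reassoc_of% coact_whiskerLeft_coact, ← associator_naturality_left_assoc,
          ← associator_naturality_left_assoc, hμ]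
        simp only [comp_whiskerRight, Category.assoc]
    _ = N.coinvProj ≫ (λ_ N.M).inv ≫ (A.η ▷ N.M) := by
        rw [hcomul, coinvProj]
        simp only [comp_whiskerRight, Category.assoc]
        rw [associator_naturality_left_assoc, ← whisker_exchange,
          leftUnitor_inv_whiskerRight_assoc, Iso.inv_hom_id_assoc,
          ← leftUnitor_inv_naturality_assoc]

lemma IsCoinvariant.of_comp_coinvProj {N : HopfModule A} {X : C} {g : X ⟶ N.M}
    (hg : g ≫ N.coinvProj = g) : N.IsCoinvariant g := by
  rw [IsCoinvariant, ← hg, Category.assoc, N.isCoinvariant_coinvProj, Category.assoc]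

lemma whiskerLeft_extend_act {X : C} (g : X ⟶ N.M) :
    (A.H ◁ N.extend g) ≫ N.act = (α_ A.H A.H X).inv ≫ (A.μ ▷ X) ≫ N.extend g := by
  rw [extend, MonoidalCategory.whiskerLeft_comp, Category.assoc, whiskerLeft_act_act,
    associator_inv_naturality_right_assoc, whisker_exchange_assoc]

lemma extend_coact {X : C} {g : X ⟶ N.M} (hg : N.IsCoinvariant g) :
    N.extend g ≫ N.coact = (A.δ ▷ X) ≫ (α_ A.H A.H X).hom ≫ (A.H ◁ N.extend g) := by
  have hg' : g ≫ N.coact = (λ_ X).inv ≫ (A.η ⊗ₘ g) := by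
    rw [hg, leftUnitor_inv_naturality_assoc, ← tensorHom_def']
  calc N.extend g ≫ N.coact
      = (A.δ ▷ X) ≫ ((A.H ⊗ A.H) ◁ (g ≫ N.coact)) ≫ tensorμ A.H A.H A.H N.M ≫
          (A.μ ⊗ₘ N.act) := by
        rw [extend, Category.assoc, N.compat, MonoidalCategory.tensorHom_def, Category.assoc,
          whisker_exchange_assoc, MonoidalCategory.whiskerLeft_comp_assoc]
    _ = (A.δ ▷ X) ≫ ((A.H ⊗ A.H) ◁ (λ_ X).inv) ≫ tensorμ A.H A.H (𝟙_ C) X ≫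
          ((A.H ◁ A.η) ⊗ₘ (A.H ◁ g)) ≫ (A.μ ⊗ₘ N.act) := by
        rw [hg', MonoidalCategory.whiskerLeft_comp_assoc, tensorμ_natural_right_assoc]
    _ = (A.δ ▷ X) ≫ ((A.H ⊗ A.H) ◁ (λ_ X).inv) ≫ tensorμ A.H A.H (𝟙_ C) X ≫
          ((ρ_ A.H).hom ▷ (A.H ⊗ X)) ≫ (A.H ◁ N.extend g) := by
        rw [tensorHom_comp_tensorHom, A.mul_one, MonoidalCategory.tensorHom_def, extend]
    _ = (A.δ ▷ X) ≫ (α_ A.H A.H X).hom ≫ (A.H ◁ N.extend g) := by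
        rw [tensorμ, braiding_tensorUnit_right]
        monoidal

lemma extend_coinvProj {X : C} {g : X ⟶ N.M} (hg : N.IsCoinvariant g) :
    N.extend g ≫ N.coinvProj = (A.ε ▷ X) ≫ (λ_ X).hom ≫ g := by
  rw [coinvProj, reassoc_of% N.extend_coact hg, whisker_exchange_assoc,
    ← associator_naturality_left_assoc, whiskerLeft_extend_act, Iso.hom_inv_id_assoc,
    ← comp_whiskerRight_assoc, ← comp_whiskerRight_assoc, Category.assoc, A.antipode_left,
    comp_whiskerRight_assoc, extend, ← whisker_exchange_assoc, N.act_one,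
    leftUnitor_naturality]

section Splitting

variable {N} {MH : C} {ι : MH ⟶ N.M} {υ : N.M ⟶ MH}

lemma isCoinvariant_of_splitting (h1 : ι ≫ υ = 𝟙 MH) (h2 : υ ≫ ι = N.coinvProj) :
    N.IsCoinvariant ι :=
  .of_comp_coinvProj (by rw [← h2, reassoc_of% h1])

lemma extend_comp_of_splitting (h1 : ι ≫ υ = 𝟙 MH) (h2 : υ ≫ ι = N.coinvProj) :
    N.extend ι ≫ υ = (A.ε ▷ MH) ≫ (λ_ MH).hom := by
  have hυ : υ = N.coinvProj ≫ υ := by rw [← h2, Category.assoc, h1, Category.comp_id]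
  rw [hυ, reassoc_of% N.extend_coinvProj (isCoinvariant_of_splitting h1 h2), h1,
    Category.comp_id]

variable (N) in
def isoOfSplitting (h1 : ι ≫ υ = 𝟙 MH) (h2 : υ ≫ ι = N.coinvProj) : A.H ⊗ MH ≅ N.M where
  hom := N.extend ι
  inv := N.coact ≫ (A.H ◁ υ)
  hom_inv_id := by
    rw [reassoc_of% N.extend_coact (isCoinvariant_of_splitting h1 h2),
      ← MonoidalCategory.whiskerLeft_comp, extend_comp_of_splitting h1 h2,
      MonoidalCategory.whiskerLeft_comp, ← associator_naturality_middle_assoc,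
      ← comp_whiskerRight_assoc, A.counit_right]
    simp
  inv_hom_id := by
    rw [extend, Category.assoc, ← MonoidalCategory.whiskerLeft_comp_assoc, h2,
      coact_whiskerLeft_coinvProj_act]

end Splitting

end HopfModule

/-- Fundamental theorem of Hopf modules: if the idempotent ν splits through
M^H, then H ⊗ M^H ≅ M as left H-Hopf modules (H ⊗ M^H carrying the free
structure with action μ ⊗ 1 and coaction δ ⊗ 1). -/
theorem fundamental_theorem_hopf_modules {C : Type u} [Category.{v} C]
    [MonoidalCategory C] [BraidedCategory C] (A : HopfAlg C) (N : HopfModule A)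
    (MH : C) (ι : MH ⟶ N.M) (υ : N.M ⟶ MH)
    (h1 : ι ≫ υ = 𝟙 MH)
    (h2 : υ ≫ ι = N.coact ≫ (A.σ ▷ N.M) ≫ N.act) :
    ∃ e : A.H ⊗ MH ≅ N.M,
      ((A.H ◁ e.hom) ≫ N.act =
        (α_ A.H A.H MH).inv ≫ (A.μ ▷ MH) ≫ e.hom) ∧
      (e.hom ≫ N.coact =
        (A.δ ▷ MH) ≫ (α_ A.H A.H MH).hom ≫ (A.H ◁ e.hom)) :=
  ⟨N.isoOfSplitting h1 h2, N.whiskerLeft_extend_act ι,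
    N.extend_coact (HopfModule.isCoinvariant_of_splitting h1 h2)⟩
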